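/- arXiv:2107.12463 — 3 statements merged into one kernel-verified Lean document; each statement's English description precedes it below -/
import Mathlib

section
/- Let n be a positive integer and let q be a rational number with 0 < q < 1. Then q belongs to RF_{2^n} if and only if num(q) < 2^n and den(q) − num(q) < 2^n. In other words, RF_{2^n} consists exactly of 0, 1, and the reduced fractions φ/ψ with 0 < φ < 2^n and 0 < ψ − φ < 2^n. -/
/-- The reduced Farey set `RF_{2^n}`: rationals of the form `a/(a+b)` with
`0 ≤ a ≤ 2^n - 1`, `0 ≤ b ≤ 2^n - 1`, and `a + b > 0`. -/
def RF (n : ℕ) : Set ℚ :=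
  {q : ℚ | ∃ a b : ℤ, 0 ≤ a ∧ a ≤ 2 ^ n - 1 ∧ 0 ≤ b ∧ b ≤ 2 ^ n - 1 ∧
    0 < a + b ∧ q = (a : ℚ) / ((a : ℚ) + (b : ℚ))}

theorem stmt_1 (n : ℕ) (hn : 0 < n) (q : ℚ) (h0 : 0 < q) (h1 : q < 1) :
    q ∈ RF n ↔ q.num < 2 ^ n ∧ (q.den : ℤ) - q.num < 2 ^ n := by
  have hnum : 0 < q.num := Rat.num_pos.mpr h0
  have hlt : q.num < (q.den : ℤ) := by
    exact_mod_cast Rat.lt_one_iff_num_lt_denom.mpr h1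
  have hden : (0:ℤ) < q.den := by exact_mod_cast q.pos
  constructor
  · rintro ⟨a, b, ha0, ha, hb0, hb, hab, hq⟩
    set c := a + b with hc
    have hcpos : (0:ℤ) < c := hab
    have hcQ : ((c:ℚ)) ≠ 0 := by exact_mod_cast hcpos.ne'
    have hdenQ : ((q.den : ℚ)) ≠ 0 := by exact_mod_cast hden.ne'
    have hq' : (a : ℚ) / (c : ℚ) = (q.num : ℚ) / (q.den : ℚ) := by
      rw [Rat.num_div_den]
      push_cast [hc] at hq ⊢
      exact hq.symm
    have hcross : a * (q.den : ℤ) = q.num * c := by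
      have := (div_eq_div_iff hcQ hdenQ).mp hq'
      exact_mod_cast this
    have hdvd : (q.den : ℤ) ∣ c := by
      have hcop : IsCoprime (q.num) ((q.den : ℤ)) := by
        rw [Int.isCoprime_iff_gcd_eq_one]
        exact q.reduced
      have : (q.den : ℤ) ∣ q.num * c := ⟨a, by linarith [hcross]⟩
      exact (hcop.symm.dvd_of_dvd_mul_left this)
    obtain ⟨k, hk⟩ := hdvd
    have hkpos : 0 < k := by
      by_contra h
      push_neg at h
      nlinarith
    have ha_eq : a = q.num * k := by
      have : a * (q.den : ℤ) = q.num * k * (q.den : ℤ) := by rw [hcross, hk]; ring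
      exact mul_right_cancel₀ hden.ne' this
    constructor
    · calc q.num ≤ q.num * k := le_mul_of_one_le_right hnum.le hkpos
      _ = a := ha_eq.symm
      _ ≤ 2 ^ n - 1 := ha
      _ < 2 ^ n := by linarith
    · have hb_eq : b = ((q.den : ℤ) - q.num) * k := by
        have : c = (q.den : ℤ) * k := hk
        have : a + b = (q.den : ℤ) * k := this
        nlinarith [ha_eq]
      calc (q.den : ℤ) - q.num ≤ ((q.den : ℤ) - q.num) * k :=
            le_mul_of_one_le_right (by linarith) hkpos
      _ = b := hb_eq.symm
      _ ≤ 2 ^ n - 1 := hb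
      _ < 2 ^ n := by linarith
  · rintro ⟨h2, h3⟩
    refine ⟨q.num, (q.den : ℤ) - q.num, hnum.le, by linarith, by linarith, by linarith,
      by linarith, ?_⟩
    have : ((q.num : ℚ)) + (((q.den : ℤ) - q.num : ℤ) : ℚ) = (q.den : ℚ) := by
      push_cast; ring
    rw [this, Rat.num_div_den]
end

section
/- Let n be a positive integer and let t be an integer with 0 ≤ t ≤ 2^n − 1. Then there exists a rational number q in RF_{2^n} with t/2^n < q < (2t+1)/2^{n+1} if and only if 1 ≤ t ≤ 2^n − 2. -/
theorem stmt_5 (n : ℕ) (hn : 0 < n) (t : ℤ) (ht0 : 0 ≤ t) (ht1 : t ≤ 2 ^ n - 1) :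
    (∃ q ∈ RF n, (t : ℚ) / 2 ^ n < q ∧ q < (2 * (t : ℚ) + 1) / 2 ^ (n + 1)) ↔
    (1 ≤ t ∧ t ≤ 2 ^ n - 2) := by
  have h2nZ : (2:ℤ) ≤ 2 ^ n := by
    calc (2:ℤ) = 2 ^ 1 := by ring
    _ ≤ 2 ^ n := pow_le_pow_right₀ (by norm_num) hn
  have h2nQ : (2:ℚ) ≤ 2 ^ n := by exact_mod_cast (by exact_mod_cast h2nZ : ((2:ℤ):ℚ) ≤ ((2:ℤ)^n : ℤ))
  have hNpos : (0:ℚ) < 2 ^ n := by positivity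
  have hN1pos : (0:ℚ) < 2 ^ (n+1) := by positivity
  have hpow : (2:ℚ) ^ (n+1) = 2 * 2 ^ n := by ring
  obtain ⟨k, hk⟩ : ∃ k : ℤ, (2:ℤ) ^ n = 2 * k := ⟨2 ^ (n-1), by
    rw [← pow_succ']; congr 1; omega⟩
  constructor
  · rintro ⟨q, ⟨a, b, ha0, ha1, hb0, hb1, hab, rfl⟩, h1, h2⟩
    have habQ : (0:ℚ) < (a:ℚ) + (b:ℚ) := by exact_mod_cast hab
    by_contra hc
    push_neg at hc
    rw [div_lt_div_iff₀ hNpos habQ] at h1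
    rw [div_lt_div_iff₀ habQ hN1pos] at h2
    -- back to integers
    have h1' : t * (a + b) < a * 2 ^ n := by exact_mod_cast h1
    have h2' : a * 2 ^ (n+1) < (2 * t + 1) * (a + b) := by exact_mod_cast h2
    have ht : t = 0 ∨ t = 2 ^ n - 1 := by omega
    rcases ht with rfl | rfl
    · -- a ≥ 1, then a * 2^(n+1) < a + b impossible
      have ha1' : 1 ≤ a := by nlinarith
      have : (2:ℤ)^(n+1) = 2 * 2^n := by ring
      nlinarith
    · -- b = 0, then contradiction
      have hb : b = 0 := by nlinarith
      subst hb
      have : (2:ℤ)^(n+1) = 2 * 2^n := by ring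
      nlinarith
  · rintro ⟨h1, h2⟩
    by_cases hc : 2 * t + 1 < 2 ^ n
    · refine ⟨(t:ℚ) / ((2:ℚ)^n - 1), ⟨t, 2^n - 1 - t, ht0, by linarith, by omega, by omega,
        by omega, by push_cast; ring_nf⟩, ?_, ?_⟩
      · rw [div_lt_div_iff₀ hNpos (by linarith)]
        have htQ : (1:ℚ) ≤ (t:ℚ) := by exact_mod_cast h1
        nlinarith
      · rw [div_lt_div_iff₀ (by linarith) hN1pos]
        have hcQ : 2 * (t:ℚ) + 1 < 2 ^ n := by exact_mod_cast hc
        have htQ : (0:ℚ) ≤ (t:ℚ) := by exact_mod_cast ht0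
        nlinarith [hpow]
    · have hc' : (2:ℤ)^n < 2 * t + 1 := by omega
      refine ⟨((t:ℚ)+1) / ((2:ℚ)^n + 1), ⟨t + 1, 2^n - t - 1 + 1, by omega, by omega, by omega,
        by omega, by omega, by push_cast; ring_nf⟩, ?_, ?_⟩
      · rw [div_lt_div_iff₀ hNpos (by linarith)]
        have htQ : (t:ℚ) < 2 ^ n := by exact_mod_cast (by omega : t < (2:ℤ)^n)
        nlinarith
      · rw [div_lt_div_iff₀ (by linarith) hN1pos]
        have hcQ : (2:ℚ)^n < 2 * (t:ℚ) + 1 := by exact_mod_cast hc'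
        nlinarith [hpow]
end

section
/- Let n be a positive integer and let t be an integer with 0 ≤ t ≤ 2^n − 1. Then there exists a rational number q in RF_{2^n} with (2t+1)/2^{n+1} < q < (t+1)/2^n if and only if 1 ≤ t ≤ 2^n − 2. -/
theorem stmt_6 (n : ℕ) (hn : 0 < n) (t : ℤ) (ht0 : 0 ≤ t) (ht1 : t ≤ 2 ^ n - 1) :
    (∃ q ∈ RF n, (2 * (t : ℚ) + 1) / 2 ^ (n + 1) < q ∧ q < ((t : ℚ) + 1) / 2 ^ n) ↔
    (1 ≤ t ∧ t ≤ 2 ^ n - 2) := by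
  have hN2 : (2:ℤ) ≤ 2 ^ n := by
    calc (2:ℤ) = 2 ^ 1 := by ring
    _ ≤ 2 ^ n := pow_le_pow_right₀ (by norm_num) hn
  have hNQ : (0:ℚ) < 2 ^ n := by positivity
  constructor
  · rintro ⟨q, ⟨a, b, ha0, ha1, hb0, hb1, hab, rfl⟩, h1, h2⟩
    have habQ : (0:ℚ) < (a:ℚ) + (b:ℚ) := by exact_mod_cast hab
    rw [div_lt_div_iff₀ (by positivity) habQ] at h1
    rw [div_lt_div_iff₀ habQ hNQ] at h2
    have h1' : (2 * t + 1) * (a + b) < a * 2 ^ (n + 1) := by exact_mod_cast h1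
    have h2' : a * 2 ^ n < (t + 1) * (a + b) := by exact_mod_cast h2
    rw [pow_succ] at h1'
    constructor
    · by_contra h
      have ht : t = 0 := by omega
      subst ht
      have ha : a = 0 := by nlinarith
      subst ha
      simp at h1'
      omega
    · by_contra h
      have ht : t = 2 ^ n - 1 := by omega
      subst ht
      have hb : 1 ≤ b := by nlinarith
      nlinarith
  · rintro ⟨ht1', ht2⟩
    have htQ1 : (1:ℚ) ≤ (t:ℚ) := by exact_mod_cast ht1'
    have htQ2 : (t:ℚ) ≤ 2 ^ n - 2 := by
      have : (t:ℚ) ≤ ((2^n - 2 : ℤ) : ℚ) := by exact_mod_cast ht2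
      push_cast at this
      linarith
    rcases lt_or_ge (2 * t) (2 ^ n) with hc | hc
    · -- witness a = t+1, b = 2^n - t
      have hcQ : 2 * (t:ℚ) + 1 < 2 ^ n := by
        have hsplit : (2:ℤ) ^ n = 2 * 2 ^ (n - 1) := by
          rw [← pow_succ']
          congr 1
          omega
        have : (2 * t : ℤ) ≤ 2 ^ n - 2 := by omega
        have h2 : (2 * (t:ℚ)) ≤ ((2^n - 2 : ℤ) : ℚ) := by exact_mod_cast this
        push_cast at h2
        linarith
      refine ⟨((t:ℚ) + 1) / (2 ^ n + 1), ⟨t + 1, 2 ^ n - t, by omega, by omega, by omega,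
        by omega, by omega, ?_⟩, ?_, ?_⟩
      · push_cast
        ring_nf
      · rw [div_lt_div_iff₀ (by positivity) (by positivity), pow_succ]
        nlinarith
      · rw [div_lt_div_iff₀ (by positivity) hNQ]
        nlinarith
    · -- witness a = t, b = 2^n - t - 1
      have hcQ : (2:ℚ) ^ n ≤ 2 * (t:ℚ) := by
        have h2 : ((2^n : ℤ) : ℚ) ≤ ((2 * t : ℤ) : ℚ) := by exact_mod_cast hc
        push_cast at h2
        linarith
      have hden : (0:ℚ) < 2 ^ n - 1 := by linarith
      refine ⟨(t:ℚ) / (2 ^ n - 1), ⟨t, 2 ^ n - t - 1, by omega, by omega, by omega,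
        by omega, by omega, ?_⟩, ?_, ?_⟩
      · push_cast
        ring_nf
      · rw [div_lt_div_iff₀ (by positivity) hden, pow_succ]
        nlinarith
      · rw [div_lt_div_iff₀ hden hNQ]
        nlinarith
end
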